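/- Let d = d₁ + ⋯ + d_r with r ≥ 2, d_j ≥ 1, and let V : ℤ^d → ℂ be Γ-periodic. Then V is (d₁,…,d_r)-separable if and only if V is (s,t)-separable for every pair of indices s, t lying in distinct blocks, i.e. for every 1 ≤ i < m ≤ r and every s in block i and t in block m (where block j consists of indices d₀+⋯+d_{j-1}+1 through d₁+⋯+d_j). -/

import Mathlib

open scoped BigOperators

/-- `f` depends only on the coordinates in `S`. -/
def DependsOnlyOn {d : ℕ} (S : Set (Fin d)) (f : (Fin d → ℤ) → ℂ) : Prop :=
  ∀ n n' : Fin d → ℤ, (∀ j ∈ S, n j = n' j) → f n = f n'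

/-- `(s,t)`-separability. -/
def SepPair {d : ℕ} (s t : Fin d) (V : (Fin d → ℤ) → ℂ) : Prop :=
  ∃ Vs Vt : (Fin d → ℤ) → ℂ,
    DependsOnlyOn ({t} : Set (Fin d))ᶜ Vs ∧
    DependsOnlyOn ({s} : Set (Fin d))ᶜ Vt ∧
    ∀ n, V n = Vs n + Vt n

/-- `Γ`-periodicity for `Γ = q₁ℤ ⊕ ⋯ ⊕ q_dℤ`. -/
def IsPeriodic {d : ℕ} (q : Fin d → ℕ) (V : (Fin d → ℤ) → ℂ) : Prop :=
  ∀ (n : Fin d → ℤ) (j : Fin d),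
    V (fun i => n i + if i = j then (q i : ℤ) else 0) = V n

/-- The offset `d₀ + ⋯ + d_{i-1}` of the `i`-th block. -/
def blockOffset {r : ℕ} (dv : Fin r → ℕ) (i : Fin r) : ℕ :=
  ∑ j ∈ Finset.Iio i, dv j

/-- The set of coordinate indices lying in the `i`-th block. -/
def blockSet {r d : ℕ} (dv : Fin r → ℕ) (i : Fin r) : Set (Fin d) :=
  {s | blockOffset dv i ≤ (s : ℕ) ∧ (s : ℕ) < blockOffset dv i + dv i}

/-- `(d₁,…,d_r)`-separability: `V` is a sum of functions each depending only on the
coordinates of one block. -/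
def BlockSep {r d : ℕ} (dv : Fin r → ℕ) (V : (Fin d → ℤ) → ℂ) : Prop :=
  ∃ Vb : Fin r → (Fin d → ℤ) → ℂ,
    (∀ i, DependsOnlyOn (blockSet dv i) (Vb i)) ∧ ∀ n, V n = ∑ i, Vb i n

/-!
`V` is `(s,t)`-separable exactly when its mixed second difference in `s` and `t` vanishes, i.e.
when the increment `V (update n s x) - V n` does not depend on `n t`. If this holds for every
pair of coordinates in distinct blocks, then changing all coordinates of one block changes `V`
by an amount that does not depend on the other blocks. Switching on the blocks of `n` one at a
time, starting from `0`, therefore gives `V n = V 0 + ∑ b, (V (n on block b, 0 elsewhere) - V 0)`,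
which is a block decomposition. Conversely, a block decomposition splits as the summand of the
block of `t` plus the remaining ones, which is an `(s,t)`-decomposition.
-/

open Function Finset

section Blocks

variable {r : ℕ} (dv : Fin r → ℕ)

lemma blockOffset_eq_sum_castLE (i : Fin r) :
    blockOffset dv i = ∑ k : Fin i, dv (Fin.castLE i.2.le k) := by
  have hIio : Iio i = univ.map (Fin.castLEEmb i.2.le) := by
    ext j
    simp only [mem_Iio, mem_map, mem_univ, true_and, Fin.castLEEmb_apply]
    exact ⟨fun h => ⟨⟨j, h⟩, rfl⟩, by rintro ⟨k, rfl⟩; exact k.2⟩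
  rw [blockOffset, hIio, sum_map]
  rfl

/-- `finSigmaFinEquiv` enumerates `Σ i, Fin (dv i)` block by block, so its inverse reads off the
block of a coordinate. -/
def blockIndex (j : Fin (∑ i, dv i)) : Fin r :=
  (finSigmaFinEquiv.symm j).1

lemma val_finSigmaFinEquiv (p : (i : Fin r) × Fin (dv i)) :
    (finSigmaFinEquiv p : ℕ) = blockOffset dv p.1 + p.2 := by
  rw [finSigmaFinEquiv_apply, blockOffset_eq_sum_castLE]

variable {dv}

lemma mem_blockSet_iff {j : Fin (∑ i, dv i)} {i : Fin r} :
    j ∈ blockSet dv i ↔ blockIndex dv j = i := by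
  constructor
  · rintro ⟨hlo, hhi⟩
    have hj : j = finSigmaFinEquiv ⟨i, ⟨j - blockOffset dv i, by omega⟩⟩ :=
      Fin.ext (by simp only [val_finSigmaFinEquiv]; omega)
    rw [blockIndex, hj, Equiv.symm_apply_apply]
  · rintro rfl
    have hj := val_finSigmaFinEquiv dv (finSigmaFinEquiv.symm j)
    rw [Equiv.apply_symm_apply] at hj
    have hlt := (finSigmaFinEquiv.symm j).2.isLt
    simp only [blockSet, Set.mem_ofPred_eq, blockIndex]
    omega

end Blocks

section DependsOn

variable {ι : Type*} {α : ι → Type*} {β : Type*} {f : (Π i, α i) → β}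

lemma DependsOn.inter {s t : Set ι} (hs : DependsOn f s) (ht : DependsOn f t) :
    DependsOn f (s ∩ t) := by
  classical
  intro x y h
  calc f x = f (s.piecewise x y) := hs fun i hi => by simp [hi]
    _ = f y := ht fun i hi => by
      by_cases his : i ∈ s
      · simp [his, h i ⟨his, hi⟩]
      · simp [his]

lemma dependsOn_of_forall_notMem [Finite ι] {s : Set ι} (h : ∀ t ∉ s, DependsOn f {t}ᶜ) :
    DependsOn f s := by
  suffices key : ∀ u : Set ι, u.Finite → (∀ t ∈ u, DependsOn f {t}ᶜ) → DependsOn f uᶜ by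
    simpa using key sᶜ (Set.toFinite _) h
  intro u hu
  induction u, hu using Set.Finite.induction_on with
  | empty => exact fun _ => by simpa using dependsOn_univ f
  | @insert a u _ _ ih =>
    intro hu
    rw [Set.insert_eq, Set.compl_union]
    exact (hu a (Set.mem_insert a u)).inter
      (ih fun t ht => hu t (Set.mem_insert_of_mem a ht))

end DependsOn

section Differences

variable {ι α G : Type*} [DecidableEq ι] [AddCommGroup G] {V : (ι → α) → G}

lemma dependsOn_sub_piecewise {s : Set ι} (A : Finset ι)
    (hΔ : ∀ a ∈ A, ∀ x, DependsOn (fun n => V (update n a x) - V n) s) (u : ι → α) :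
    DependsOn (fun n => V (A.piecewise u n) - V n) s := by
  induction A using Finset.induction_on with
  | empty => intro n n' _; simp
  | @insert a A _ ih =>
    have hA := ih fun b hb => hΔ b (mem_insert_of_mem hb)
    intro n n' h
    have hpw : ∀ i ∈ s, A.piecewise u n i = A.piecewise u n' i := fun i hi => by
      by_cases hiA : i ∈ A <;> simp [hiA, h i hi]
    have hstep : V (update (A.piecewise u n) a (u a)) - V (A.piecewise u n)
        = V (update (A.piecewise u n') a (u a)) - V (A.piecewise u n') :=
      hΔ a (mem_insert_self a A) (u a) hpw
    have hrest : V (A.piecewise u n) - V n = V (A.piecewise u n') - V n' := hA h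
    simp only [piecewise_insert]
    calc V (update (A.piecewise u n) a (u a)) - V n
        = (V (update (A.piecewise u n) a (u a)) - V (A.piecewise u n))
          + (V (A.piecewise u n) - V n) := by abel
      _ = (V (update (A.piecewise u n') a (u a)) - V (A.piecewise u n'))
          + (V (A.piecewise u n') - V n') := by rw [hstep, hrest]
      _ = V (update (A.piecewise u n') a (u a)) - V n' := by abel

variable [Fintype ι] [Zero α] {κ : Type*} [Fintype κ] [DecidableEq κ] (β : ι → κ)

lemma eq_sum_blocks
    (hΔ : ∀ s t, β s ≠ β t → ∀ x, DependsOn (fun n => V (update n s x) - V n) {t}ᶜ)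
    (n : ι → α) :
    V n = ∑ b, (V (({j | β j = b} : Finset ι).piecewise n 0) - V 0) + V 0 := by
  have hblock : ∀ b (u : ι → α), DependsOn
      (fun m => V (({j | β j = b} : Finset ι).piecewise u m) - V m) (β ⁻¹' {b}) := by
    refine fun b => dependsOn_sub_piecewise _ fun a ha x => ?_
    obtain rfl : β a = b := by simpa using ha
    exact dependsOn_of_forall_notMem fun t ht => hΔ a t (Ne.symm ht) x
  suffices key : ∀ S : Finset κ, V (({j | β j ∈ S} : Finset ι).piecewise n 0)
      = ∑ b ∈ S, (V (({j | β j = b} : Finset ι).piecewise n 0) - V 0) + V 0 by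
    have huniv : ({j | β j ∈ univ} : Finset ι).piecewise n 0 = n :=
      funext fun j => piecewise_eq_of_mem _ _ _ (by simp)
    have hfull := key univ
    rwa [huniv] at hfull
  intro S
  induction S using Finset.induction_on with
  | empty =>
    have hempty : ({j | β j ∈ (∅ : Finset κ)} : Finset ι).piecewise n 0 = 0 :=
      funext fun j => piecewise_eq_of_notMem _ _ _ (by simp)
    simp [hempty]
  | @insert b S hb ih =>
    set m := ({j | β j ∈ S} : Finset ι).piecewise n 0
    have hsplit : ({j | β j ∈ insert b S} : Finset ι).piecewise n 0
        = ({j | β j = b} : Finset ι).piecewise n m := by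
      ext j
      by_cases hj : β j = b <;> simp [m, Finset.piecewise, hj]
    have hoff : V (({j | β j = b} : Finset ι).piecewise n m) - V m
        = V (({j | β j = b} : Finset ι).piecewise n 0) - V 0 :=
      hblock b n fun j hj => by simp_all [m]
    rw [sum_insert hb, hsplit, add_assoc, ← ih, ← hoff, sub_add_cancel]

end Differences

section Separability

variable {d : ℕ} {V : (Fin d → ℤ) → ℂ} {s t : Fin d}

lemma SepPair.symm (h : SepPair s t V) : SepPair t s V := by
  obtain ⟨Vs, Vt, hVs, hVt, hV⟩ := h
  exact ⟨Vt, Vs, hVt, hVs, fun n => by rw [hV, add_comm]⟩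

lemma SepPair.dependsOn_sub_update (h : SepPair s t V) (x : ℤ) :
    DependsOn (fun n => V (update n s x) - V n) {t}ᶜ := by
  obtain ⟨Vs, Vt, hVs, hVt, hV⟩ := h
  have hVt_update : ∀ n, Vt (update n s x) = Vt n := fun n =>
    hVt _ _ fun j hj => update_of_ne hj x n
  intro n n' h
  have hVs_update : Vs (update n s x) = Vs (update n' s x) := hVs _ _ fun j hj => by
    by_cases hjs : j = s
    · simp [hjs]
    · simp [hjs, h j hj]
  simp only [hV, hVt_update, add_sub_add_right_eq_sub, hVs_update, hVs n n' h]

end Separability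

section BlockSeparability

variable {r : ℕ} {dv : Fin r → ℕ} {V : (Fin (∑ i, dv i) → ℤ) → ℂ}

lemma BlockSep.sepPair (hV : BlockSep dv V) {i m : Fin r} (him : i ≠ m)
    {s t : Fin (∑ i, dv i)} (hs : s ∈ blockSet dv i) (ht : t ∈ blockSet dv m) :
    SepPair s t V := by
  obtain ⟨Vb, hVb, hsum⟩ := hV
  refine ⟨fun n => ∑ j ∈ univ.erase m, Vb j n, Vb m, ?_, ?_, ?_⟩
  · intro n n' h
    refine sum_congr rfl fun j hj => hVb j n n' fun k hk => h k ?_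
    rintro rfl
    exact ne_of_mem_erase hj ((mem_blockSet_iff.1 hk).symm.trans (mem_blockSet_iff.1 ht))
  · refine fun n n' h => hVb m n n' fun k hk => h k ?_
    rintro rfl
    exact him ((mem_blockSet_iff.1 hs).symm.trans (mem_blockSet_iff.1 hk))
  · exact fun n => by rw [hsum, sum_erase_add _ _ (mem_univ m)]

lemma blockSep_of_sepPair (hr : 0 < r)
    (hsep : ∀ s t, blockIndex dv s ≠ blockIndex dv t → SepPair s t V) : BlockSep dv V := by
  let i₀ : Fin r := ⟨0, hr⟩
  refine ⟨fun i n => V (({j | blockIndex dv j = i} : Finset _).piecewise n 0) - V 0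
    + (Pi.single i₀ (V 0) : Fin r → ℂ) i, fun i n n' h => ?_, fun n => ?_⟩
  · have hpart : ({j | blockIndex dv j = i} : Finset _).piecewise n 0
        = ({j | blockIndex dv j = i} : Finset _).piecewise n' 0 :=
      piecewise_congr _ (fun j hj => h j (mem_blockSet_iff.2 (by simpa using hj))) fun _ _ => rfl
    simp only [hpart]
  · rw [sum_add_distrib, sum_pi_single']
    simp only [mem_univ, if_true]
    exact eq_sum_blocks _ (fun s t hst => (hsep s t hst).dependsOn_sub_update) n

end BlockSeparability

theorem blockSep_iff_sepPair {r d : ℕ} (dv : Fin r → ℕ) (hr : 2 ≤ r)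
    (hd : d = ∑ j, dv j)
    (V : (Fin d → ℤ) → ℂ) :
    BlockSep dv V ↔
      ∀ i m : Fin r, i < m → ∀ s t : Fin d,
        s ∈ blockSet dv i → t ∈ blockSet dv m → SepPair s t V := by
  subst hd
  refine ⟨fun hV i m him s t hs ht => hV.sepPair him.ne hs ht, fun H => ?_⟩
  refine blockSep_of_sepPair (by omega) fun s t hst => ?_
  rcases hst.lt_or_gt with hlt | hlt
  · exact H _ _ hlt s t (mem_blockSet_iff.2 rfl) (mem_blockSet_iff.2 rfl)
  · exact (H _ _ hlt t s (mem_blockSet_iff.2 rfl) (mem_blockSet_iff.2 rfl)).symm
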